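/- arXiv:math/0701329 — 4 statements merged into one kernel-verified Lean document; each statement's English description precedes it below -/
import Mathlib

section
/- Let H₁ ⊆ H₂ ⊆ ⋯ be an increasing sequence of closed subspaces of a Hilbert space H whose union is dense in H. If (aₙ) is a sequence of bounded operators aₙ ∈ B(Hₙ) with supₙ ‖aₙ‖ < ∞ and such that aₙ equals the compression of aₙ₊₁ to Hₙ for all n, then there exists a unique bounded operator a ∈ B(H) whose compression to each Hₙ equals aₙ, and moreover ‖a‖ = supₙ ‖aₙ‖. -/
/-!
Extend each `aₙ` by zero to `Tₙ = ιₙ aₙ Pₙ ∈ B(H)`. Coherence says `Pₘ Tₙ Pₘ = Tₘ` for `m ≤ n`,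
so for `x ∈ Hₘ` the vectors `Tₙ x` satisfy `Pₘ (Tₙ x) = Tₘ x`. By Pythagoras,
`‖Tₙ x‖² = ‖Tₘ x‖² + ‖Tₙ x - Tₘ x‖²`: the squared norms increase to a finite limit, which makes
`(Tₙ x)` Cauchy. A uniformly bounded family is equicontinuous, so Cauchy-ness spreads from the
dense union to all of `H`, and the pointwise limit `b` satisfies `‖b‖ ≤ supₙ ‖aₙ‖`; compressing
cannot increase the norm, which gives the reverse inequality. Uniqueness: `Pₙ → 1` strongly, so
`b x = lim Pₙ (b x)` is determined by the compressions of `b` on the dense union.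
-/

open ContinuousLinearMap Filter Topology

theorem ContinuousLinearMap.opNorm_comp_comp_le_of_norm_le_one {𝕜 E F G H : Type*}
    [NontriviallyNormedField 𝕜] [SeminormedAddCommGroup E] [SeminormedAddCommGroup F]
    [SeminormedAddCommGroup G] [SeminormedAddCommGroup H] [NormedSpace 𝕜 E] [NormedSpace 𝕜 F]
    [NormedSpace 𝕜 G] [NormedSpace 𝕜 H] {f : G →L[𝕜] H} {g : F →L[𝕜] G} {h : E →L[𝕜] F} (hf : ‖f‖ ≤ 1)
    (hh : ‖h‖ ≤ 1) : ‖f ∘L g ∘L h‖ ≤ ‖g‖ :=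
  calc ‖f ∘L g ∘L h‖ ≤ ‖f‖ * (‖g‖ * ‖h‖) :=
        (opNorm_comp_le _ _).trans (by gcongr; exact opNorm_comp_le _ _)
    _ ≤ 1 * (‖g‖ * 1) := by gcongr
    _ = ‖g‖ := by ring

section PointwiseLimit

variable {𝕜 E F : Type*} [NontriviallyNormedField 𝕜] [NormedAddCommGroup E] [NormedSpace 𝕜 E]
  [NormedAddCommGroup F] [NormedSpace 𝕜 F]

theorem ContinuousLinearMap.isClosed_setOf_cauchySeq_apply {T : ℕ → E →L[𝕜] F}
    (hT : BddAbove (Set.range fun n => ‖T n‖)) : IsClosed {x | CauchySeq fun n => T n x} := by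
  obtain ⟨C, hC⟩ := hT
  let G : ℕ × ℕ → E →L[𝕜] F := fun mn => T mn.1 - T mn.2
  have hG : Equicontinuous ((↑) ∘ G) := by
    have hbound_iff : (∃ C, ∀ mn, ‖G mn‖ ≤ C) ↔ Equicontinuous ((↑) ∘ G) :=
      (NormedSpace.equicontinuous_TFAE G).out 5 1
    refine hbound_iff.mp ⟨2 * C, fun mn => ?_⟩
    exact (norm_sub_le _ _).trans (by linarith [hC ⟨mn.1, rfl⟩, hC ⟨mn.2, rfl⟩])
  convert hG.isClosed_setOfPred_tendsto (l := atTop) (f := 0) continuous_const using 2 with x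
  simp [cauchySeq_iff_tendsto_dist_atTop_0, dist_eq_norm, G, tendsto_zero_iff_norm_tendsto_zero]

theorem ContinuousLinearMap.exists_tendsto_apply_of_dense [CompleteSpace E] [CompleteSpace F]
    {T : ℕ → E →L[𝕜] F} {C : ℝ} (hC : ∀ n, ‖T n‖ ≤ C) {s : Set E} (hs : Dense s)
    (hcauchy : ∀ x ∈ s, CauchySeq fun n => T n x) :
    ∃ b : E →L[𝕜] F, (∀ x, Tendsto (fun n => T n x) atTop (𝓝 (b x))) ∧ ‖b‖ ≤ C := by
  have hclosed := isClosed_setOf_cauchySeq_apply ⟨C, Set.forall_mem_range.mpr hC⟩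
  have hcauchy_univ : ∀ x, CauchySeq fun n => T n x := fun x =>
    hclosed.closure_subset_iff.mpr hcauchy (hs.closure_eq ▸ Set.mem_univ x)
  choose f hf using fun x => cauchySeq_tendsto_of_complete (hcauchy_univ x)
  let b := continuousLinearMapOfTendsto T (tendsto_pi_nhds.mpr hf)
  refine ⟨b, hf, opNorm_le_bound _ ((norm_nonneg _).trans (hC 0)) fun x => ?_⟩
  exact le_of_tendsto' (hf x).norm fun n => (T n).le_of_opNorm_le (hC n) x

end PointwiseLimit

namespace Submodule

variable {𝕜 E : Type*} [RCLike 𝕜] [NormedAddCommGroup E] [InnerProductSpace 𝕜 E]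

theorem starProjection_comp_starProjection_of_ge {U V : Submodule 𝕜 E}
    [U.HasOrthogonalProjection] [V.HasOrthogonalProjection] (h : U ≤ V) :
    V.starProjection ∘L U.starProjection = U.starProjection :=
  ContinuousLinearMap.ext fun x => starProjection_eq_self_iff.mpr (h (starProjection_apply_mem U x))

theorem cauchySeq_of_starProjection_eq {K : ℕ → Submodule 𝕜 E}
    [∀ n, (K n).HasOrthogonalProjection] {y : ℕ → E}
    (hy : ∀ m n, m ≤ n → (K m).starProjection (y n) = y m) {C : ℝ} (hC : ∀ n, ‖y n‖ ≤ C) :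
    CauchySeq y := by
  have hpyth : ∀ m n, m ≤ n → ‖y n‖ ^ 2 = ‖y m‖ ^ 2 + ‖y n - y m‖ ^ 2 := by
    intro m n hmn
    have hortho : inner 𝕜 (y m) (y n - y m) = 0 := by
      rw [← hy m n hmn]
      exact inner_right_of_mem_orthogonal (starProjection_apply_mem _ _)
        (sub_starProjection_mem_orthogonal _)
    rw [sq, sq, sq, ← norm_add_sq_eq_norm_sq_add_norm_sq_of_inner_eq_zero _ _ hortho,
      add_sub_cancel]
  set s : ℕ → ℝ := fun n => ‖y n‖ ^ 2
  have hs_mono : Monotone s := fun m n hmn => by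
    simp only [s, hpyth m n hmn]; exact le_add_of_nonneg_right (sq_nonneg _)
  have hs_bdd : BddAbove (Set.range s) :=
    ⟨C ^ 2, Set.forall_mem_range.mpr fun n => pow_le_pow_left₀ (norm_nonneg _) (hC n) 2⟩
  have hs_cauchy : CauchySeq s := (tendsto_atTop_ciSup hs_mono hs_bdd).cauchySeq
  rw [Metric.cauchySeq_iff'] at hs_cauchy ⊢
  intro ε hε
  obtain ⟨N, hN⟩ := hs_cauchy (ε ^ 2) (by positivity)
  refine ⟨N, fun n hn => ?_⟩
  have hsq : dist (y n) (y N) ^ 2 < ε ^ 2 := by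
    rw [dist_eq_norm]
    have := hN n hn
    rw [Real.dist_eq, abs_of_nonneg (sub_nonneg.mpr (hs_mono hn))] at this
    simp only [s, hpyth N n hn] at this
    linarith
  exact lt_of_pow_lt_pow_left₀ 2 hε.le hsq

noncomputable def compression (K : Submodule 𝕜 E) [K.HasOrthogonalProjection] (b : E →L[𝕜] E) :
    K →L[𝕜] K :=
  K.orthogonalProjectionOnto ∘L b ∘L K.subtypeL

noncomputable def extendByZero (K : Submodule 𝕜 E) [K.HasOrthogonalProjection] (a : K →L[𝕜] K) :
    E →L[𝕜] E :=
  K.subtypeL ∘L a ∘L K.orthogonalProjectionOnto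

section Compression

variable (K : Submodule 𝕜 E) [K.HasOrthogonalProjection]

@[simp]
theorem compression_extendByZero (a : K →L[𝕜] K) : K.compression (K.extendByZero a) = a := by
  ext x
  simp [compression, extendByZero]

theorem extendByZero_compression (b : E →L[𝕜] E) :
    K.extendByZero (K.compression b) = K.starProjection * b * K.starProjection :=
  rfl

theorem norm_compression_le (b : E →L[𝕜] E) : ‖K.compression b‖ ≤ ‖b‖ :=
  opNorm_comp_comp_le_of_norm_le_one K.orthogonalProjectionOnto_norm_le K.norm_subtypeL_le

theorem norm_extendByZero_le (a : K →L[𝕜] K) : ‖K.extendByZero a‖ ≤ ‖a‖ :=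
  opNorm_comp_comp_le_of_norm_le_one K.norm_subtypeL_le K.orthogonalProjectionOnto_norm_le

end Compression

variable {K : ℕ → Submodule 𝕜 E} [∀ n, (K n).HasOrthogonalProjection]

theorem starProjection_mul_mul_starProjection_of_le (hK : Monotone K) {T : ℕ → E →L[𝕜] E}
    (hT : ∀ n, (K n).starProjection * T (n + 1) * (K n).starProjection = T n) {m n : ℕ}
    (hmn : m ≤ n) : (K m).starProjection * T n * (K m).starProjection = T m := by
  induction n, hmn using Nat.le_induction with
  | base =>
    have hP := (K m).isIdempotentElem_starProjection
    conv_lhs => rw [← hT m]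
    rw [← mul_assoc, ← mul_assoc, hP.eq, mul_assoc _ _ (K m).starProjection, hP.eq, hT]
  | succ n hmn ih =>
    have hmn' : (K m).starProjection * (K n).starProjection = (K m).starProjection :=
      starProjection_comp_starProjection_of_le (hK hmn)
    have hnm : (K n).starProjection * (K m).starProjection = (K m).starProjection :=
      starProjection_comp_starProjection_of_ge (hK hmn)
    calc (K m).starProjection * T (n + 1) * (K m).starProjection
        = (K m).starProjection * (K n).starProjection * T (n + 1) *
            ((K n).starProjection * (K m).starProjection) := by
          rw [hmn', hnm]
      _ = (K m).starProjection * T n * (K m).starProjection := by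
          rw [← hT n]; simp only [mul_assoc]
      _ = T m := ih

variable (hK : Monotone K) (hdense : Dense (↑(⨆ n, K n) : Set E))
include hK hdense

theorem eq_of_starProjection_mul_mul_starProjection_eq {b b' : E →L[𝕜] E}
    (h : ∀ n, (K n).starProjection * b * (K n).starProjection =
      (K n).starProjection * b' * (K n).starProjection) : b = b' := by
  have hU : ⊤ ≤ (⨆ n, K n).topologicalClosure :=
    (dense_iff_topologicalClosure_eq_top.mp hdense).ge
  refine ContinuousLinearMap.ext_on (by rwa [span_eq]) fun x hx => ?_
  obtain ⟨k, hxk⟩ := (mem_iSup_of_directed K hK.directed_le).mp hx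
  refine tendsto_nhds_unique (starProjection_tendsto_self K hK (b x) hU)
    ((starProjection_tendsto_self K hK (b' x) hU).congr' ?_)
  filter_upwards [eventually_ge_atTop k] with n hn
  have hPx : (K n).starProjection x = x := starProjection_eq_self_iff.mpr (hK hn hxk)
  simpa only [mul_apply_eq_comp, hPx] using congr($(h n) x).symm

theorem exists_starProjection_mul_mul_starProjection_eq [CompleteSpace E] {T : ℕ → E →L[𝕜] E}
    (hT : ∀ n, (K n).starProjection * T (n + 1) * (K n).starProjection = T n) {C : ℝ}
    (hC : ∀ n, ‖T n‖ ≤ C) :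
    ∃ b : E →L[𝕜] E, (∀ n, (K n).starProjection * b * (K n).starProjection = T n) ∧ ‖b‖ ≤ C := by
  have hcauchy : ∀ x ∈ (↑(⨆ n, K n) : Set E), CauchySeq fun n => T n x := by
    intro x hx
    obtain ⟨k, hxk⟩ := (mem_iSup_of_directed K hK.directed_le).mp hx
    rw [← cauchySeq_shift k]
    refine cauchySeq_of_starProjection_eq (K := fun n => K (n + k)) (fun m n hmn => ?_)
      (fun n => (T (n + k)).le_of_opNorm_le (hC _) x)
    have hPx : (K (m + k)).starProjection x = x :=
      starProjection_eq_self_iff.mpr (hK le_add_self hxk)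
    simpa only [mul_apply_eq_comp, hPx] using
      congr($(starProjection_mul_mul_starProjection_of_le hK hT (Nat.add_le_add_right hmn k)) x)
  obtain ⟨b, hb, hbC⟩ := exists_tendsto_apply_of_dense hC hdense hcauchy
  refine ⟨b, fun n => ContinuousLinearMap.ext fun x => ?_, hbC⟩
  refine tendsto_nhds_unique
    (((K n).starProjection.continuous.tendsto _).comp (hb ((K n).starProjection x))) ?_
  refine tendsto_const_nhds.congr' ?_
  filter_upwards [eventually_ge_atTop n] with k hk
  exact congr($(starProjection_mul_mul_starProjection_of_le hK hT hk) x).symm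

end Submodule

open Submodule

/-- Given an increasing sequence of closed subspaces `p n` of a Hilbert space `H`
with dense union, and a uniformly bounded coherent sequence of operators `a n ∈ B(p n)`
(each `a n` is the compression of `a (n+1)` to `p n`), there is a unique operator
`b ∈ B(H)` compressing to `a n` on each `p n`, and `‖b‖ = ⨆ n, ‖a n‖`. -/
theorem coherent_sequence_limit
    (H : Type*) [NormedAddCommGroup H] [InnerProductSpace ℂ H] [CompleteSpace H]
    (p : ℕ → Submodule ℂ H) [∀ n, CompleteSpace (p n)]
    (hmono : Monotone p)
    (hdense : Dense (↑(⨆ n, p n) : Set H))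
    (a : ∀ n, (p n →L[ℂ] p n))
    (hbdd : ∃ c : ℝ, ∀ n, ‖a n‖ ≤ c)
    (hcoh : ∀ n, Submodule.orthogonalProjectionOnto (p n) ∘L
        ((p (n + 1)).subtypeL ∘L a (n + 1) ∘L Submodule.orthogonalProjectionOnto (p (n + 1))) ∘L
        (p n).subtypeL = a n) :
    ∃ b : H →L[ℂ] H,
      (∀ n, Submodule.orthogonalProjectionOnto (p n) ∘L b ∘L (p n).subtypeL = a n) ∧
      ‖b‖ = ⨆ n, ‖a n‖ ∧
      ∀ b' : H →L[ℂ] H,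
        (∀ n, Submodule.orthogonalProjectionOnto (p n) ∘L b' ∘L (p n).subtypeL = a n) → b' = b := by
  obtain ⟨c, hc⟩ := hbdd
  have hbdd_range : BddAbove (Set.range fun n => ‖a n‖) := ⟨c, Set.forall_mem_range.mpr hc⟩
  have htower : ∀ n, (p n).starProjection * (p (n + 1)).extendByZero (a (n + 1)) *
      (p n).starProjection = (p n).extendByZero (a n) := fun n => by
    rw [← extendByZero_compression]
    exact congrArg (p n).extendByZero (hcoh n)
  obtain ⟨b, hb, hb_norm⟩ := exists_starProjection_mul_mul_starProjection_eq hmono hdense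
    (T := fun n => (p n).extendByZero (a n)) htower
    fun n => (norm_extendByZero_le _ _).trans (le_ciSup hbdd_range n)
  have hcomp : ∀ n, (p n).compression b = a n := fun n => by
    rw [← compression_extendByZero (p n) (a n), ← hb n, ← extendByZero_compression,
      compression_extendByZero]
  refine ⟨b, hcomp, hb_norm.antisymm (ciSup_le fun n => hcomp n ▸ norm_compression_le _ b),
    fun b' hb' => eq_of_starProjection_mul_mul_starProjection_eq hmono hdense fun n => ?_⟩
  rw [← extendByZero_compression, ← extendByZero_compression]
  exact congrArg (p n).extendByZero ((hb' n).trans (hcomp n).symm)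
end

section
/- Let H be a closed subspace of a Hilbert space K with orthogonal projection P = P_H, and let ψ : A → B(K) be a unital completely positive map on a unital C*-algebra A. If the compressed map x ↦ P ψ(x) P (viewed as a map A → B(H)) is multiplicative (i.e., a *-homomorphism), then H is invariant under ψ(x) for every x ∈ A, i.e., (1 − P) ψ(x) P = 0 for all x ∈ A. -/
open ContinuousLinearMap

noncomputable section

/-- A matrix over a star-ring is "positive" if it factors as `Bᴴ * B`. -/
def MatPos {R : Type*} [NonUnitalSemiring R] [StarRing R] {n : ℕ}
    (M : Matrix (Fin n) (Fin n) R) : Prop :=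
  ∃ B : Matrix (Fin n) (Fin n) R, M = B.conjTranspose * B

/-- Complete positivity of a map defined on all of `A`. -/
def IsCPfull {A : Type*} [CStarAlgebra A]
    {H : Type*} [NormedAddCommGroup H] [InnerProductSpace ℂ H] [CompleteSpace H]
    (Φ : A → (H →L[ℂ] H)) : Prop :=
  ∀ (n : ℕ) (M : Matrix (Fin n) (Fin n) A), MatPos M → MatPos (M.map Φ)

/-!
Complete positivity applied to the positive matrix `[[1, x], [x⋆, x⋆x]]` gives both
`ψ(x⋆) = ψ(x)⋆` and the Schwarz inequality `‖ψ(x)ξ‖² ≤ ⟪ξ, ψ(x⋆x)ξ⟫`. For `ξ ∈ H`,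
multiplicativity of the compression rewrites the right-hand side as
`⟪ξ, Pψ(x)⋆Pψ(x)ξ⟫ = ‖Pψ(x)ξ‖²`, so `ψ(x)ξ` has no component orthogonal to `H`.
-/

open RCLike

local notation "⟪" x ", " y "⟫" => @inner ℂ _ _ x y

theorem MatPos.isHermitian {R : Type*} [NonUnitalSemiring R] [StarRing R] {n : ℕ}
    {M : Matrix (Fin n) (Fin n) R} (hM : MatPos M) : M.IsHermitian := by
  obtain ⟨B, rfl⟩ := hM
  exact Matrix.isHermitian_conjTranspose_mul_self B

theorem matPos_one_star_mul_self {R : Type*} [Semiring R] [StarRing R] (x : R) :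
    MatPos !![1, x; star x, star x * x] :=
  ⟨!![1, x; 0, 0], by
    ext i j; fin_cases i <;> fin_cases j <;> simp [Matrix.mul_apply, Fin.sum_univ_two]⟩

section Operators

variable {K : Type*} [NormedAddCommGroup K] [InnerProductSpace ℂ K] [CompleteSpace K]

theorem MatPos.re_sum_inner_nonneg {n : ℕ} {M : Matrix (Fin n) (Fin n) (K →L[ℂ] K)}
    (hM : MatPos M) (v : Fin n → K) : 0 ≤ re (∑ i, ∑ j, ⟪v i, M i j (v j)⟫) := by
  obtain ⟨C, rfl⟩ := hM
  have hexpand : ∑ i, ∑ j, ⟪v i, (C.conjTranspose * C) i j (v j)⟫ =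
      ∑ k, ⟪∑ i, C k i (v i), ∑ j, C k j (v j)⟫ := by
    simp only [Matrix.mul_apply, Matrix.conjTranspose_apply, star_eq_adjoint, sum_apply,
      mul_apply_eq_comp, inner_sum, sum_inner, adjoint_inner_right]
    rw [Finset.sum_comm_cycle]
    exact Finset.sum_congr rfl fun k _ => Finset.sum_comm
  rw [hexpand, map_sum]
  exact Finset.sum_nonneg fun k _ => by rw [inner_self_eq_norm_sq]; positivity

theorem inner_eq_of_compression_eq_star_mul {S T : K →L[ℂ] K} (p : Submodule ℂ K)
    [p.HasOrthogonalProjection]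
    (h : p.orthogonalProjectionOnto ∘L T ∘L p.subtypeL =
      (p.orthogonalProjectionOnto ∘L star S ∘L p.subtypeL) ∘L
        (p.orthogonalProjectionOnto ∘L S ∘L p.subtypeL))
    {ξ : K} (hξ : ξ ∈ p) : ⟪ξ, T ξ⟫ = ⟪S ξ, p.starProjection (S ξ)⟫ := by
  have hξ' := congrArg (fun R : p →L[ℂ] p => ⟪(⟨ξ, hξ⟩ : p), R ⟨ξ, hξ⟩⟫) h
  simp only [comp_apply, Submodule.subtypeL_apply,
    Submodule.inner_orthogonalProjectionOnto_eq_of_mem_left] at hξ'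
  rwa [star_eq_adjoint, adjoint_inner_right, ← Submodule.starProjection_apply] at hξ'

namespace IsCPfull

variable {A : Type*} [CStarAlgebra A] {Φ : A → (K →L[ℂ] K)}

theorem map_star (hΦ : IsCPfull Φ) (x : A) : Φ (star x) = star (Φ x) := by
  simpa using ((hΦ 2 _ (matPos_one_star_mul_self x)).isHermitian.apply 1 0).symm

theorem norm_sq_le_re_inner (hΦ : IsCPfull Φ) (h1 : Φ 1 = 1) (x : A) (ξ : K) :
    ‖Φ x ξ‖ ^ 2 ≤ re ⟪ξ, Φ (star x * x) ξ⟫ := by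
  have hpos := (hΦ 2 _ (matPos_one_star_mul_self x)).re_sum_inner_nonneg ![-Φ x ξ, ξ]
  simpa [Fin.sum_univ_two, h1, hΦ.map_star, star_eq_adjoint, adjoint_inner_right,
    inner_self_eq_norm_sq_to_K, ← Complex.ofReal_pow] using hpos

end IsCPfull

end Operators

/-- If `ψ : A → B(K)` is a unital completely positive map and the compression
of `ψ` to a closed subspace `H = p ⊆ K` is multiplicative, then `p` is invariant under every
`ψ(x)`, i.e. `(1 - P) ψ(x) P = 0`. -/
theorem invariant_of_multiplicative_compression
    (A : Type*) [CStarAlgebra A]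
    (K : Type*) [NormedAddCommGroup K] [InnerProductSpace ℂ K] [CompleteSpace K]
    (ψ : A →ₗ[ℂ] (K →L[ℂ] K)) (hunital : ψ 1 = 1)
    (hcp : IsCPfull (ψ : A → (K →L[ℂ] K)))
    (p : Submodule ℂ K) [CompleteSpace p]
    (hmult : ∀ x y : A,
      p.orthogonalProjectionOnto ∘L ψ (x * y) ∘L p.subtypeL =
        (p.orthogonalProjectionOnto ∘L ψ x ∘L p.subtypeL) ∘L
        (p.orthogonalProjectionOnto ∘L ψ y ∘L p.subtypeL)) :
    ∀ (x : A), ∀ ξ ∈ p, ψ x ξ ∈ p := by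
  intro x ξ hξ
  have hschwarz : ‖ψ x ξ‖ ^ 2 ≤ re ⟪ξ, ψ (star x * x) ξ⟫ := hcp.norm_sq_le_re_inner hunital x ξ
  have hcompression : ⟪ξ, ψ (star x * x) ξ⟫ = ⟪p.starProjection (ψ x ξ), ψ x ξ⟫ := by
    rw [inner_eq_of_compression_eq_star_mul p (hcp.map_star x ▸ hmult (star x) x) hξ,
      p.inner_starProjection_left_eq_right]
  rw [hcompression, p.re_inner_starProjection_eq_normSq] at hschwarz
  refine (p.mem_iff_norm_starProjection _).2 <|
    le_antisymm (p.norm_starProjection_apply_le _) ?_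
  exact le_of_sq_le_sq hschwarz (norm_nonneg _)
end
end

section
/- Let X and Y be standard Borel spaces, f : X → Y a surjective Borel map, and μ a finite positive Borel measure on Y. Then there exists a Borel set N ⊆ Y with μ(N) = 0 and a Borel map g : Y \ N → X such that f(g(y)) = y for all y ∈ Y \ N. -/
/-!
Refining the topology of `X` and parametrizing it by Baire space reduces everything to a continuous
surjection `h : (ℕ → ℕ) → Y` onto a Polish space. For compact `K ⊆ ℕ → ℕ`, the lexicographically
least point of `K ∩ h ⁻¹' {y}` is a Borel function of `y ∈ h '' K`: its `k`-th coordinate is the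
least `n` with `y` in the closed set `h '' (K ∩ cylinder)`. Such compacts exhaust `μ`: choosing
bounds `b 0, b 1, …` one at a time, continuity from below of outer measure keeps
`μ (h '' {x | ∀ i < k, x i ≤ b i})` within `ε` of `μ univ`, and outer regularity passes this to
`h '' Iic b`. Countably many of these pieces cover `Y` up to a null set.
-/

open MeasureTheory Set Function Filter Topology ENNReal

theorem measurable_sInf_setOf_mem {α : Type*} [MeasurableSpace α] {B : ℕ → Set α}
    (hB : ∀ n, MeasurableSet (B n)) : Measurable fun a => sInf {n | a ∈ B n} := by
  refine measurable_of_Iic fun k => ?_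
  have : (fun a => sInf {n | a ∈ B n}) ⁻¹' Iic k = (⋃ n ≤ k, B n) ∪ (⋃ n, B n)ᶜ := by
    ext a
    rcases eq_empty_or_nonempty {n | a ∈ B n} with hS | hS
    · simp_all [eq_empty_iff_forall_notMem]
    · have hmem := Nat.sInf_mem hS
      simp only [mem_preimage, mem_Iic, mem_union, mem_iUnion, exists_prop, mem_compl_iff]
      refine ⟨fun hk => Or.inl ⟨_, hk, hmem⟩, ?_⟩
      rintro (⟨n, hnk, hn⟩ | hnot)
      · exact (Nat.sInf_le hn).trans hnk
      · exact absurd ⟨_, hmem⟩ hnot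
  rw [this]
  exact (MeasurableSet.biUnion (to_countable _) fun n _ => hB n).union
    (MeasurableSet.iUnion hB).compl

/-- The lexicographically least element of `S`, when `S` is nonempty and closed. -/
noncomputable def lexMin (S : Set (ℕ → ℕ)) : ℕ → ℕ
  | k => sInf {n | ∃ x ∈ S, (∀ i < k, x i = lexMin S i) ∧ x k = n}

theorem lexMin_apply (S : Set (ℕ → ℕ)) (k : ℕ) :
    lexMin S k = sInf {n | ∃ x ∈ S, (∀ i < k, x i = lexMin S i) ∧ x k = n} := by
  rw [lexMin]

theorem exists_mem_forall_lt_eq_lexMin {S : Set (ℕ → ℕ)} (hS : S.Nonempty) (k : ℕ) :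
    ∃ x ∈ S, ∀ i < k, x i = lexMin S i := by
  induction k with
  | zero => exact hS.imp fun x hx => ⟨hx, by simp⟩
  | succ k ih =>
    obtain ⟨x, hxS, hx⟩ := ih
    have hne : {n | ∃ x ∈ S, (∀ i < k, x i = lexMin S i) ∧ x k = n}.Nonempty :=
      ⟨x k, x, hxS, hx, rfl⟩
    obtain ⟨z, hzS, hz, hzk⟩ := Nat.sInf_mem hne
    refine ⟨z, hzS, fun i hi => ?_⟩
    rcases Nat.lt_succ_iff_lt_or_eq.1 hi with hi | rfl
    · exact hz i hi
    · rw [hzk, lexMin_apply]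

theorem IsClosed.lexMin_mem {S : Set (ℕ → ℕ)} (hSc : IsClosed S) (hS : S.Nonempty) :
    lexMin S ∈ S := by
  choose x hxS hx using exists_mem_forall_lt_eq_lexMin hS
  have hlim : Tendsto x atTop (𝓝 (lexMin S)) := tendsto_pi_nhds.2 fun i =>
    tendsto_const_nhds.congr' <| (eventually_gt_atTop i).mono fun k hk => (hx k i hk).symm
  exact hSc.mem_of_tendsto hlim (.of_forall hxS)

theorem apply_lexMin_inter_preimage {Y : Type*} [TopologicalSpace Y] [T1Space Y]
    {h : (ℕ → ℕ) → Y} (hc : Continuous h) {K : Set (ℕ → ℕ)} (hK : IsClosed K) {y : Y}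
    (hy : y ∈ h '' K) : h (lexMin (K ∩ h ⁻¹' {y})) = y := by
  obtain ⟨x, hxK, rfl⟩ := hy
  have hclosed : IsClosed (K ∩ h ⁻¹' {h x}) := hK.inter (isClosed_singleton.preimage hc)
  exact (hclosed.lexMin_mem ⟨x, hxK, rfl⟩).2

theorem isClosed_setOf_forall_fin_eq_and_eq {k : ℕ} (s : Fin k → ℕ) (n : ℕ) :
    IsClosed {x : ℕ → ℕ | (∀ i : Fin k, x i = s i) ∧ x k = n} := by
  simp only [ofPred_and, ofPred_forall]
  exact (isClosed_iInter fun i => isClosed_eq (continuous_apply _) continuous_const).inter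
    (isClosed_eq (continuous_apply _) continuous_const)

theorem measurable_lexMin_inter_preimage {Y : Type*} [TopologicalSpace Y] [T2Space Y]
    [MeasurableSpace Y] [OpensMeasurableSpace Y] {h : (ℕ → ℕ) → Y} (hc : Continuous h)
    {K : Set (ℕ → ℕ)} (hK : IsCompact K) : Measurable fun y => lexMin (K ∩ h ⁻¹' {y}) := by
  refine measurable_pi_lambda _ fun k => ?_
  induction k using Nat.strong_induction_on with
  | _ k ih =>
    set Φ : (Fin k → ℕ) → Y → ℕ := fun s y =>
      sInf {n | y ∈ h '' (K ∩ {x | (∀ i : Fin k, x i = s i) ∧ x k = n})}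
    have hΦ : Measurable fun p : (Fin k → ℕ) × Y => Φ p.1 p.2 :=
      measurable_from_prod_countable_right fun s => measurable_sInf_setOf_mem fun n =>
        ((hK.inter_right (isClosed_setOf_forall_fin_eq_and_eq s n)).image hc).isClosed.measurableSet
    have hprefix : Measurable fun y (i : Fin k) => lexMin (K ∩ h ⁻¹' {y}) i :=
      measurable_pi_lambda _ fun i => ih i i.2
    convert hΦ.comp (hprefix.prodMk measurable_id) using 1
    ext y
    rw [comp_apply, lexMin_apply]
    congr! 2 with n
    simp [Fin.forall_iff, and_comm, and_assoc]

theorem isCompact_Iic_pi (b : ℕ → ℕ) : IsCompact (Iic b) := by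
  rw [← pi_univ_Iic]
  exact isCompact_univ_pi fun i => (finite_Iic _).isCompact

theorem exists_pi_Iio_Iic_subset_of_isOpen {V : Set (ℕ → ℕ)} (hV : IsOpen V) {b : ℕ → ℕ}
    (hbV : Iic b ⊆ V) : ∃ k, (Iio k).pi (fun i => Iic (b i)) ⊆ V := by
  by_contra! hbad
  choose x hx hxV using fun k => not_subset.1 (hbad k)
  -- clipping `x k` at `b` only changes coordinates `≥ k`
  obtain ⟨a, haK, φ, hφ, hφa⟩ :=
    (isCompact_Iic_pi b).tendsto_subseq (x := fun k => x k ⊓ b) fun k => mem_Iic.2 inf_le_right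
  have hxa : Tendsto (x ∘ φ) atTop (𝓝 a) := tendsto_pi_nhds.2 fun i =>
    (tendsto_pi_nhds.1 hφa i).congr' <| (eventually_gt_atTop i).mono fun k hk =>
      inf_eq_left.2 (hx (φ k) i (hk.trans_le hφ.le_apply))
  obtain ⟨k, hk⟩ := (hxa.eventually (hV.mem_nhds (hbV haK))).exists
  exact hxV (φ k) hk

theorem pi_Iio_Iic_eq_iUnion_update (c : ℕ → ℕ) (k : ℕ) :
    (Iio k).pi (fun i => Iic (c i)) = ⋃ n, (Iio (k + 1)).pi (fun i => Iic (update c k n i)) := by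
  ext x
  simp only [Set.mem_pi, mem_Iio, mem_Iic, mem_iUnion]
  refine ⟨fun hx => ⟨x k, fun i hi => ?_⟩, fun ⟨n, hx⟩ i hi => ?_⟩
  · rcases Nat.lt_succ_iff_lt_or_eq.1 hi with hi | rfl
    · simpa [update_of_ne hi.ne] using hx i hi
    · simp
  · simpa [update_of_ne hi.ne] using hx i (hi.trans k.lt_succ_self)

theorem monotone_pi_Iio_Iic_update (c : ℕ → ℕ) (k : ℕ) :
    Monotone fun n => (Iio (k + 1)).pi (fun i => Iic (update c k n i)) := by
  intro m n hmn
  refine pi_mono fun i _ => Iic_subset_Iic.2 ?_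
  rcases eq_or_ne i k with rfl | hi
  · simpa using hmn
  · simp [update_of_ne hi]

theorem measure_image_pi_Iio_Iic_eq_iSup {Y : Type*} [MeasurableSpace Y] (μ : Measure Y)
    (h : (ℕ → ℕ) → Y) (c : ℕ → ℕ) (k : ℕ) :
    μ (h '' (Iio k).pi (fun i => Iic (c i))) =
      ⨆ n, μ (h '' (Iio (k + 1)).pi (fun i => Iic (update c k n i))) := by
  rw [pi_Iio_Iic_eq_iUnion_update, image_iUnion]
  exact Monotone.measure_iUnion fun _ _ hmn => image_mono (monotone_pi_Iio_Iic_update c k hmn)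

theorem exists_forall_of_exists_update {P : ℕ → (ℕ → ℕ) → Prop}
    (hP : ∀ k c c', (∀ i < k, c i = c' i) → P k c → P k c') (h₀ : P 0 0)
    (hstep : ∀ k c, P k c → ∃ n, P (k + 1) (update c k n)) : ∃ b, ∀ k, P k b := by
  classical
  choose N hN using fun k c => (em (P k c)).elim (fun hc => (hstep k c hc).imp fun _ h _ => h)
    fun hc => ⟨0, fun h => absurd h hc⟩
  let c : ℕ → ℕ → ℕ := fun k => Nat.rec 0 (fun k ck => update ck k (N k ck)) k
  have hc : ∀ k, P k (c k) := fun k => by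
    induction k with
    | zero => exact h₀
    | succ k ih => exact hN k (c k) ih
  have hstable : ∀ k, ∀ i < k, c k i = c (i + 1) i := by
    intro k
    induction k with
    | zero => intro i hi; omega
    | succ k ih =>
      intro i hi
      rcases Nat.lt_succ_iff_lt_or_eq.1 hi with hi | rfl
      · rw [← ih i hi]; exact update_of_ne hi.ne _ _
      · rfl
  exact ⟨fun i => c (i + 1) i, fun k => hP k _ _ (hstable k) (hc k)⟩

theorem exists_measure_compl_image_Iic_lt {Y : Type*} [TopologicalSpace Y]
    [TopologicalSpace.MetrizableSpace Y] [MeasurableSpace Y] [BorelSpace Y]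
    {h : (ℕ → ℕ) → Y} (hc : Continuous h) (hs : Surjective h) (μ : Measure Y) [IsFiniteMeasure μ]
    {ε : ℝ≥0∞} (hε : ε ≠ 0) : ∃ b, μ (h '' Iic b)ᶜ < ε := by
  have hε2 : ε / 2 ≠ 0 := by simpa using hε
  obtain ⟨b, hb⟩ :
      ∃ b : ℕ → ℕ, ∀ k, μ univ < μ (h '' (Iio k).pi (fun i => Iic (b i))) + ε / 2 := by
    refine exists_forall_of_exists_update (fun k c c' hcc' hc => ?_) ?_ fun k c hc => ?_
    · have : ((Iio k).pi fun i => Iic (c i)) = (Iio k).pi fun i => Iic (c' i) :=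
        pi_congr rfl fun i hi => by rw [hcc' i hi]
      rwa [← this]
    · simpa [hs.range_eq] using ENNReal.lt_add_right (measure_ne_top μ univ) hε2
    · rw [measure_image_pi_Iio_Iic_eq_iSup, ENNReal.iSup_add] at hc
      exact lt_iSup_iff.1 hc
  have hK : IsClosed (h '' Iic b) := (isCompact_Iic_pi b).image hc |>.isClosed
  obtain ⟨U, hKU, hU, hμU⟩ := (h '' Iic b).exists_isOpen_lt_add (measure_ne_top μ _) hε2
  obtain ⟨k, hk⟩ := exists_pi_Iio_Iic_subset_of_isOpen (hU.preimage hc) (image_subset_iff.1 hKU)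
  refine ⟨b, ?_⟩
  have : μ univ < ε + μ (h '' Iic b) := calc
    μ univ < μ (h '' (Iio k).pi (fun i => Iic (b i))) + ε / 2 := hb k
    _ ≤ μ U + ε / 2 := by gcongr; exact image_subset_iff.2 hk
    _ ≤ μ (h '' Iic b) + ε / 2 + ε / 2 := by gcongr
    _ = ε + μ (h '' Iic b) := by rw [add_assoc, ENNReal.add_halves, add_comm]
  rw [measure_compl hK.measurableSet (measure_ne_top μ _)]
  exact ENNReal.sub_lt_of_lt_add (measure_mono (subset_univ _)) this

theorem exists_measurable_forall_mem_iUnion_comp_eq {X Y : Type*} [MeasurableSpace X]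
    [MeasurableSpace Y] {f : X → Y} {A : ℕ → Set Y} (hA : ∀ m, MeasurableSet (A m))
    {g : ℕ → Y → X} (hg : ∀ m, Measurable (g m)) (hfg : ∀ m, ∀ y ∈ A m, f (g m y) = y) :
    ∃ g' : Y → X, Measurable g' ∧ ∀ y ∈ ⋃ m, A m, f (g' y) = y := by
  obtain ⟨g', hg', hg'eq⟩ := exists_measurable_piecewise (disjointed A) (.disjointed hA) g hg
    fun m n hmn y hy => absurd (disjoint_disjointed A hmn) (not_disjoint_iff.2 ⟨y, hy⟩)
  refine ⟨g', hg', fun y hy => ?_⟩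
  obtain ⟨m, hm⟩ := mem_iUnion.1 ((iUnion_disjointed (f := A)).symm ▸ hy)
  rw [hg'eq m hm]
  exact hfg m y (disjointed_subset A m hm)

theorem exists_measurable_section_ae_of_continuous {Y : Type*} [TopologicalSpace Y]
    [TopologicalSpace.MetrizableSpace Y] [MeasurableSpace Y] [BorelSpace Y]
    {h : (ℕ → ℕ) → Y} (hc : Continuous h) (hs : Surjective h) (μ : Measure Y) [IsFiniteMeasure μ] :
    ∃ (N : Set Y) (g : Y → ℕ → ℕ), MeasurableSet N ∧ μ N = 0 ∧ Measurable g ∧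
      ∀ y ∉ N, h (g y) = y := by
  choose b hb using fun m : ℕ =>
    exists_measure_compl_image_Iic_lt hc hs μ (ENNReal.inv_ne_zero.2 (natCast_ne_top m))
  have hA : ∀ m, IsClosed (h '' Iic (b m)) := fun m => ((isCompact_Iic_pi _).image hc).isClosed
  obtain ⟨g, hg, hhg⟩ := exists_measurable_forall_mem_iUnion_comp_eq
    (fun m => (hA m).measurableSet)
    (fun m => measurable_lexMin_inter_preimage hc (isCompact_Iic_pi (b m)))
    fun m y hy => apply_lexMin_inter_preimage hc isClosed_Iic hy
  refine ⟨(⋃ m, h '' Iic (b m))ᶜ, g, (MeasurableSet.iUnion fun m => (hA m).measurableSet).compl,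
    ?_, hg, fun y hy => hhg y (not_not.1 hy)⟩
  refine le_antisymm (ge_of_tendsto' ENNReal.tendsto_inv_nat_nhds_zero fun m => ?_) bot_le
  exact (measure_mono (compl_subset_compl.2 (subset_iUnion _ m))).trans (hb m).le

theorem Measurable.exists_nat_nat_continuous_surjective_comp {X Y : Type*} [TopologicalSpace X]
    [PolishSpace X] [MeasurableSpace X] [BorelSpace X] [Nonempty X] [TopologicalSpace Y]
    [SecondCountableTopology Y] [MeasurableSpace Y] [OpensMeasurableSpace Y] {f : X → Y}
    (hf : Measurable f) : ∃ σ : (ℕ → ℕ) → X, Continuous σ ∧ Surjective σ ∧ Continuous (f ∘ σ) := by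
  obtain ⟨t, ht, hft, htPolish⟩ := hf.exists_continuous
  obtain ⟨σ, hσ, hσs⟩ := @PolishSpace.exists_nat_nat_continuous_surjective X t htPolish _
  exact ⟨σ, continuous_le_rng ht hσ, hσs, hft.comp hσ⟩

/-- von Neumann-type measurable selection. If `f : X → Y` is a surjective Borel
map between standard Borel spaces and `μ` is a finite measure on `Y`, there is a Borel null
set `N ⊆ Y` and a Borel map `g` with `f (g y) = y` for all `y ∉ N`. -/
theorem exists_measurable_section_ae
    (X Y : Type*) [MeasurableSpace X] [StandardBorelSpace X]
    [MeasurableSpace Y] [StandardBorelSpace Y]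
    (f : X → Y) (hf : Measurable f) (hsurj : Function.Surjective f)
    (μ : Measure Y) [IsFiniteMeasure μ] :
    ∃ (N : Set Y) (g : Y → X), MeasurableSet N ∧ μ N = 0 ∧ Measurable g ∧
      ∀ y ∉ N, f (g y) = y := by
  rcases isEmpty_or_nonempty X with hX | hX
  · have : IsEmpty Y := hsurj.isEmpty
    exact ⟨∅, isEmptyElim, .empty, measure_empty, measurable_of_empty _, isEmptyElim⟩
  let := upgradeStandardBorel X
  let := upgradeStandardBorel Y
  obtain ⟨σ, hσ, hσs, hfσ⟩ := hf.exists_nat_nat_continuous_surjective_comp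
  obtain ⟨N, g, hN, hμN, hg, hfg⟩ :=
    exists_measurable_section_ae_of_continuous hfσ (hsurj.comp hσs) μ
  exact ⟨N, σ ∘ g, hN, hμN, hσ.measurable.comp hg, hfg⟩
end

section
/- Bauer's theorem: Let K be a compact convex metrizable subset of a locally convex space, let x ∈ K be an extreme point, and let ν be a Borel probability measure on K whose barycenter is x (i.e., f(x) = ∫_K f dν for every continuous linear functional f, equivalently every continuous affine function). Then ν is the Dirac point mass δ_x. -/
open MeasureTheory Set Filter

/-! If a compact convex set `B ⊆ K` avoiding the extreme point `x` had positive mass, splitting `ν`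
into its parts on and off `B` would write `x = t • b₁ + (1 - t) • b₂` with `0 < t`, `b₁ ∈ B` and
`b₂ ∈ K` the barycentres of the two parts; extremality forces `x = b₁ ∈ B`. Every `y ≠ x` in `K`
has such a neighbourhood in `K`, and `K` is second countable, so `ν` is concentrated at `x`.

Barycentres of measures carried by a compact convex set `C` exist: for finitely many functionals
the conditions `f b = ∫ f dν` are met in `C` by Jensen's inequality in finite dimension
(`Convex.integral_mem`), and compactness of `C` then meets all of them at once. -/

lemma eq_of_mem_extremePoints_of_eq_add_smul {𝕜 E : Type*} [Field 𝕜] [LinearOrder 𝕜]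
    [IsStrictOrderedRing 𝕜] [AddCommGroup E] [Module 𝕜 E] {K : Set E} {x y z : E}
    (hx : x ∈ K.extremePoints 𝕜) (hy : y ∈ K) (hz : z ∈ K) {a b : 𝕜} (ha : 0 < a) (hb : 0 ≤ b)
    (hab : a + b = 1) (hxyz : x = a • y + b • z) : x = y := by
  rcases hb.eq_or_lt with rfl | hb
  · rw [hxyz, (add_zero a).symm.trans hab, one_smul, zero_smul, add_zero]
  · exact (hx.2 hy hz ⟨a, b, ha, hb, hab, hxyz.symm⟩).symm

lemma exists_isClosed_convex_mem_nhds_notMem {E : Type*} [AddCommGroup E] [Module ℝ E]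
    [TopologicalSpace E] [IsTopologicalAddGroup E] [ContinuousConstSMul ℝ E]
    [LocallyConvexSpace ℝ E] [T1Space E] {x y : E} (hxy : y ≠ x) :
    ∃ V ∈ nhds y, IsClosed V ∧ Convex ℝ V ∧ x ∉ V := by
  obtain ⟨U, W, hU, hW, hUconv, -, hyU, hxW, hUW⟩ :=
    exists_open_convex_of_notMem (𝕜 := ℝ) (mt mem_singleton_iff.1 hxy) (convex_singleton x)
      isClosed_singleton
  exact ⟨closure U, mem_of_superset (hU.mem_nhds hyU) subset_closure, isClosed_closure,
    hUconv.closure, fun hxU => (hUW.closure_left hW).notMem_of_mem_left hxU (hxW rfl)⟩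

lemma MeasureTheory.Measure.eq_dirac_of_ae_eq {α : Type*} [MeasurableSpace α]
    [MeasurableSingletonClass α] {μ : Measure α} [IsProbabilityMeasure μ] {a : α}
    (h : ∀ᵐ y ∂μ, y = a) : μ = Measure.dirac a :=
  calc μ = μ.restrict {a} := (Measure.restrict_eq_self_of_ae_mem h).symm
    _ = μ {a} • Measure.dirac a := Measure.restrict_singleton μ a
    _ = Measure.dirac a := by
      rw [(prob_compl_eq_zero_iff (measurableSet_singleton a)).1 h, one_smul]

section Barycenter

variable {X E : Type*} [TopologicalSpace X] [CompactSpace X] [MeasurableSpace X]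
  [OpensMeasurableSpace X] [AddCommGroup E] [Module ℝ E] [TopologicalSpace E]
  {φ : X → E} {C : Set E}

lemma integral_comp_mem_image_of_ae_mem {F : Type*} [NormedAddCommGroup F] [NormedSpace ℝ F]
    [CompleteSpace F] (L : E →L[ℝ] F) (hφ : Continuous φ) (hC : IsCompact C)
    (hCconv : Convex ℝ C) (μ : Measure X) [IsProbabilityMeasure μ] (hφC : ∀ᵐ y ∂μ, φ y ∈ C) :
    ∫ y, L (φ y) ∂μ ∈ L '' C :=
  (hCconv.linear_image L.toLinearMap).integral_mem (hC.image L.continuous).isClosed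
    (hφC.mono fun _ hy => mem_image_of_mem L hy)
    ((L.continuous.comp hφ).integrable_of_hasCompactSupport (.of_compactSpace _))

lemma exists_mem_forall_mem_finset_apply_eq_integral (hφ : Continuous φ) (hC : IsCompact C)
    (hCconv : Convex ℝ C) (μ : Measure X) [IsProbabilityMeasure μ] (hφC : ∀ᵐ y ∂μ, φ y ∈ C)
    (s : Finset (E →L[ℝ] ℝ)) : ∃ b ∈ C, ∀ f ∈ s, f b = ∫ y, f (φ y) ∂μ := by
  let L : E →L[ℝ] (s → ℝ) := .pi fun f => f
  obtain ⟨b, hbC, hb⟩ := integral_comp_mem_image_of_ae_mem L hφ hC hCconv μ hφC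
  refine ⟨b, hbC, fun f hf => ?_⟩
  let π : (s → ℝ) →L[ℝ] ℝ := .proj ⟨f, hf⟩
  calc f b = π (L b) := rfl
    _ = ∫ y, π (L (φ y)) ∂μ := by
      rw [hb]
      exact (π.integral_comp_comm
        ((L.continuous.comp hφ).integrable_of_hasCompactSupport (.of_compactSpace _))).symm
    _ = ∫ y, f (φ y) ∂μ := rfl

lemma exists_barycenter_mem_of_ae_mem (hφ : Continuous φ) (hC : IsCompact C)
    (hCconv : Convex ℝ C) (μ : Measure X) [IsProbabilityMeasure μ] (hφC : ∀ᵐ y ∂μ, φ y ∈ C) :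
    ∃ b ∈ C, ∀ f : E →L[ℝ] ℝ, f b = ∫ y, f (φ y) ∂μ := by
  let Z : (E →L[ℝ] ℝ) → Set E := fun f => {b | f b = ∫ y, f (φ y) ∂μ}
  obtain ⟨b, hbC, hbZ⟩ := hC.inter_iInter_nonempty Z
    (fun f => isClosed_eq f.continuous continuous_const) fun s => by
      obtain ⟨b, hbC, hb⟩ := exists_mem_forall_mem_finset_apply_eq_integral hφ hC hCconv μ hφC s
      exact ⟨b, hbC, mem_iInter₂.2 hb⟩
  exact ⟨b, hbC, mem_iInter.1 hbZ⟩

lemma exists_mem_forall_integral_eq_measureReal_mul (hφ : Continuous φ) (hC : IsCompact C)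
    (hCconv : Convex ℝ C) (hCne : C.Nonempty) (μ : Measure X) [IsFiniteMeasure μ]
    (hφC : ∀ᵐ y ∂μ, φ y ∈ C) :
    ∃ b ∈ C, ∀ f : E →L[ℝ] ℝ, ∫ y, f (φ y) ∂μ = μ.real univ * f b := by
  rcases eq_zero_or_neZero μ with rfl | hμ
  · obtain ⟨c, hc⟩ := hCne
    exact ⟨c, hc, fun f => by simp⟩
  obtain ⟨b, hbC, hb⟩ := exists_barycenter_mem_of_ae_mem hφ hC hCconv ((μ univ)⁻¹ • μ)
    (Measure.ae_smul_measure hφC _)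
  refine ⟨b, hbC, fun f => ?_⟩
  have hμ0 : μ.real univ ≠ 0 :=
    (measureReal_eq_zero_iff).not.2 (Measure.measure_univ_ne_zero.2 hμ.out)
  rw [hb f, integral_smul_measure, smul_eq_mul, ENNReal.toReal_inv, ← measureReal_def,
    mul_inv_cancel_left₀ hμ0]

end Barycenter

section Bauer

variable {E : Type*} [AddCommGroup E] [Module ℝ E] [TopologicalSpace E]
  [IsTopologicalAddGroup E] [ContinuousSMul ℝ E] [LocallyConvexSpace ℝ E] [T1Space E]
  [MeasurableSpace E] [OpensMeasurableSpace E] {K : Set E} {x : E}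

lemma measure_preimage_eq_zero_of_extreme_barycenter (hK : IsCompact K) (hKconv : Convex ℝ K)
    (hx : x ∈ K.extremePoints ℝ) (ν : Measure K) [IsProbabilityMeasure ν]
    (hbary : ∀ f : E →L[ℝ] ℝ, f x = ∫ y : K, f (y : E) ∂ν) {B : Set E} (hB : IsCompact B)
    (hBconv : Convex ℝ B) (hBK : B ⊆ K) (hxB : x ∉ B) :
    ν (Subtype.val ⁻¹' B) = 0 := by
  have : CompactSpace K := isCompact_iff_compactSpace.mp hK
  set A : Set K := Subtype.val ⁻¹' B
  have hA : MeasurableSet A := (hB.isClosed.preimage continuous_subtype_val).measurableSet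
  by_contra hA0
  obtain ⟨y, hy⟩ := nonempty_of_measure_ne_zero hA0
  obtain ⟨b₁, hb₁B, hb₁⟩ := exists_mem_forall_integral_eq_measureReal_mul continuous_subtype_val
    hB hBconv ⟨y, hy⟩ (ν.restrict A) (ae_restrict_mem hA)
  obtain ⟨b₂, hb₂K, hb₂⟩ := exists_mem_forall_integral_eq_measureReal_mul continuous_subtype_val
    hK hKconv ⟨x, hx.1⟩ (ν.restrict Aᶜ) (ae_of_all _ Subtype.prop)
  have hx_comb : x = ν.real A • b₁ + ν.real Aᶜ • b₂ := by
    refine (SeparatingDual.eq_iff_forall_dual_eq (R := ℝ)).2 fun f => ?_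
    have hf : Integrable (fun y : K => f y) ν :=
      (f.continuous.comp continuous_subtype_val).integrable_of_hasCompactSupport
        (.of_compactSpace _)
    rw [hbary f, ← integral_add_compl hA hf, hb₁ f, hb₂ f]
    simp
  have hpos : 0 < ν.real A := measureReal_nonneg.lt_of_ne' ((measureReal_eq_zero_iff).not.2 hA0)
  exact hxB (eq_of_mem_extremePoints_of_eq_add_smul hx (hBK hb₁B) hb₂K hpos measureReal_nonneg
    (probReal_add_probReal_compl hA) hx_comb ▸ hb₁B)

lemma ae_eq_of_extreme_barycenter [SecondCountableTopology K] (hK : IsCompact K)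
    (hKconv : Convex ℝ K) (hx : x ∈ K.extremePoints ℝ) (ν : Measure K) [IsProbabilityMeasure ν]
    (hbary : ∀ f : E →L[ℝ] ℝ, f x = ∫ y : K, f (y : E) ∂ν) :
    ∀ᵐ y ∂ν, y = ⟨x, hx.1⟩ := by
  refine ae_iff.2 <| measure_null_of_locally_null _ fun y hy => ?_
  obtain ⟨V, hV, hVclosed, hVconv, hxV⟩ :=
    exists_isClosed_convex_mem_nhds_notMem fun h : (y : E) = x => hy (Subtype.ext h)
  refine ⟨Subtype.val ⁻¹' V,
    mem_nhdsWithin_of_mem_nhds (continuous_subtype_val.continuousAt hV), ?_⟩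
  simpa using measure_preimage_eq_zero_of_extreme_barycenter hK hKconv hx ν hbary
    (hK.inter_right hVclosed) (hKconv.inter hVconv) inter_subset_left fun h => hxV h.2

end Bauer

/-- Bauer's theorem: If `ν` is a Borel probability measure on a compact convex
metrizable subset `K` of a locally convex space whose barycenter is an extreme point `x` of
`K`, then `ν` is the Dirac point mass at `x`. -/
theorem bauer_dirac_of_extreme_barycenter
    (E : Type*) [AddCommGroup E] [Module ℝ E] [TopologicalSpace E]
    [IsTopologicalAddGroup E] [ContinuousSMul ℝ E] [LocallyConvexSpace ℝ E]
    [TopologicalSpace.MetrizableSpace E]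
    [MeasurableSpace E] [BorelSpace E]
    (K : Set E) (hKcomp : IsCompact K) (hKconv : Convex ℝ K)
    (x : E) (hx : x ∈ Set.extremePoints ℝ K)
    (ν : Measure K) [IsProbabilityMeasure ν]
    (hbary : ∀ f : E →L[ℝ] ℝ, f x = ∫ y : K, f (y : E) ∂ν) :
    ν = Measure.dirac (⟨x, hx.1⟩ : K) := by
  have : CompactSpace K := isCompact_iff_compactSpace.mp hKcomp
  exact Measure.eq_dirac_of_ae_eq (ae_eq_of_extreme_barycenter hKcomp hKconv hx ν hbary)
end
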